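/- The endomorphism φ_{α,β} of BS(n,1) (sending a ↦ a^α, t ↦ a^β t) is an automorphism if and only if α is a unit of the ring ℤ[1/n]. -/

import Mathlib

/-- The single defining relator of the Baumslag–Solitar group `BS(n,1)`:
`t⁻¹ * aⁿ * t * a⁻¹`, where `a = FreeGroup.of false`, `t = FreeGroup.of true`. -/
def BSrel (n : ℤ) : Set (FreeGroup Bool) :=
  {(FreeGroup.of true)⁻¹ * (FreeGroup.of false) ^ n * FreeGroup.of true * (FreeGroup.of false)⁻¹}

/-- The solvable Baumslag–Solitar group `BS(n,1) = ⟨a, t ∣ t⁻¹aⁿt = a⟩`. -/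
abbrev BS (n : ℤ) : Type := PresentedGroup (BSrel n)

/-- The generator `a` of `BS(n,1)`. -/
def BSa (n : ℤ) : BS n := PresentedGroup.of false

/-- The generator `t` of `BS(n,1)`. -/
def BSt (n : ℤ) : BS n := PresentedGroup.of true

/-- `apow n k p` represents `a^(k/nᵖ) := t⁻ᵖ aᵏ tᵖ` in `BS(n,1)`. -/
def apow (n k p : ℤ) : BS n := (BSt n) ^ (-p) * (BSa n) ^ k * (BSt n) ^ p

lemma conj_zpow' {G : Type*} [Group G] (g x : G) (m : ℤ) :
    (g⁻¹ * x * g) ^ m = g⁻¹ * x ^ m * g := by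
  simpa [MulAut.conj_apply] using (map_zpow (MulAut.conj g⁻¹) x m).symm

lemma bs_rel (n : ℤ) : (BSt n)⁻¹ * (BSa n) ^ n * BSt n = BSa n := by
  have h : (PresentedGroup.mk (BSrel n))
      ((FreeGroup.of true)⁻¹ * (FreeGroup.of false) ^ n * FreeGroup.of true *
        (FreeGroup.of false)⁻¹) = 1 := by
    apply (QuotientGroup.eq_one_iff _).2
    exact Subgroup.subset_normalClosure rfl
  simp only [map_mul, map_zpow, map_inv] at h
  have h2 : (BSt n)⁻¹ * (BSa n) ^ n * BSt n * (BSa n)⁻¹ = 1 := h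
  rw [mul_inv_eq_one] at h2
  exact h2

lemma apow_eq (n k p : ℤ) : apow n k p = ((BSt n) ^ p)⁻¹ * (BSa n) ^ k * (BSt n) ^ p := by
  rw [apow, zpow_neg]

lemma apow_zpow (n k p m : ℤ) : (apow n k p) ^ m = apow n (k * m) p := by
  rw [apow_eq, conj_zpow', ← zpow_mul, ← apow_eq]

lemma apow_zero (n p : ℤ) : apow n 0 p = 1 := by
  rw [apow_eq]; group

lemma apow_p_zero (n k : ℤ) : apow n k 0 = (BSa n) ^ k := by
  rw [apow_eq]; group

lemma apow_mul_same (n k l p : ℤ) : apow n k p * apow n l p = apow n (k + l) p := by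
  rw [apow_eq, apow_eq, apow_eq]; group

lemma conj_t (n k p s : ℤ) :
    ((BSt n) ^ s)⁻¹ * apow n k p * (BSt n) ^ s = apow n k (p + s) := by
  rw [apow_eq, apow_eq]; group

lemma apow_reduce (n m p : ℤ) : apow n (n * m) (p + 1) = apow n m p := by
  have key : (BSt n)⁻¹ * (BSa n) ^ (n * m) * BSt n = (BSa n) ^ m := by
    rw [zpow_mul, ← conj_zpow', bs_rel]
  calc apow n (n * m) (p + 1)
      = ((BSt n) ^ p)⁻¹ * ((BSt n)⁻¹ * (BSa n) ^ (n * m) * BSt n) * (BSt n) ^ p := by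
        rw [apow_eq]; group
    _ = ((BSt n) ^ p)⁻¹ * (BSa n) ^ m * (BSt n) ^ p := by rw [key]
    _ = apow n m p := (apow_eq n m p).symm

lemma apow_reduce' (n c p : ℤ) (s : ℕ) : apow n (c * n ^ s) (p + s) = apow n c p := by
  induction s with
  | zero => simp
  | succ i ih =>
    have h1 : c * n ^ (i + 1) = n * (c * n ^ i) := by ring
    have h2 : (p + (i + 1 : ℕ) : ℤ) = (p + i) + 1 := by push_cast; ring
    rw [h1, h2, apow_reduce, ih]

lemma bsa_eq (n : ℤ) (r : ℕ) : BSa n = (apow n 1 r) ^ ((n : ℤ) ^ r) := by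
  rw [apow_zpow, one_mul]
  have := apow_reduce' n 1 0 r
  simp only [one_mul, zero_add] at this
  rw [this, apow_p_zero, zpow_one]

lemma apow_commute_le (n k l p q : ℤ) (h : p ≤ q) :
    Commute (apow n k p) (apow n l q) := by
  set r : ℕ := (q - p).toNat with hr
  have hq : q = p + r := by
    rw [hr, Int.toNat_of_nonneg (by omega)]; ring
  have base : Commute ((BSa n) ^ k) (apow n l r) := by
    rw [bsa_eq n r, ← zpow_mul, (by rw [apow_zpow, one_mul] : apow n l (r:ℤ) = (apow n 1 r) ^ l)]
    exact Commute.zpow_zpow (Commute.refl _) _ _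
  have hmap := base.map (MulAut.conj ((BSt n ^ p)⁻¹)).toMonoidHom
  simp only [MulEquiv.coe_toMonoidHom, MulAut.conj_apply, inv_inv] at hmap
  have e1 : (BSt n ^ p)⁻¹ * (BSa n) ^ k * BSt n ^ p = apow n k p := (apow_eq n k p).symm
  have e2 : (BSt n ^ p)⁻¹ * apow n l r * BSt n ^ p = apow n l q := by
    rw [conj_t, add_comm, ← hq]
  rwa [e1, e2] at hmap

lemma apow_commute (n k l p q : ℤ) : Commute (apow n k p) (apow n l q) := by
  rcases le_total p q with h | h
  · exact apow_commute_le n k l p q h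
  · exact (apow_commute_le n l k q p h).symm

lemma conj_t_one (n k p : ℤ) :
    (BSt n)⁻¹ * apow n k p * BSt n = apow n k (p + 1) := by
  have := conj_t n k p 1
  simpa using this

lemma hom_apow (n : ℤ) (χ : BS n →* BS n) (K P L Q : ℤ)
    (hA : χ (BSa n) = apow n K P) (hT : χ (BSt n) = apow n L Q * BSt n)
    (c : ℤ) : ∀ r : ℤ, 0 ≤ r → χ (apow n c r) = apow n (K * c) (P + r) := by
  intro r hr
  refine Int.le_induction (motive := fun r _ => χ (apow n c r) = apow n (K * c) (P + r)) ?_ ?_ r hr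
  · show χ (apow n c 0) = apow n (K * c) (P + 0)
    rw [apow_p_zero, map_zpow, hA, apow_zpow, add_zero]
  · intro i hi ih
    show χ (apow n c (i+1)) = apow n (K * c) (P + (i+1))
    have h1 : apow n c (i + 1) = (BSt n)⁻¹ * apow n c i * BSt n := (conj_t_one n c i).symm
    rw [h1, map_mul, map_mul, map_inv, hT, ih, mul_inv_rev]
    have hcomm : Commute (apow n L Q) (apow n (K * c) (P + i)) := apow_commute n L (K*c) Q (P+i)
    calc (BSt n)⁻¹ * (apow n L Q)⁻¹ * apow n (K * c) (P + i) * (apow n L Q * BSt n)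
        = (BSt n)⁻¹ * ((apow n L Q)⁻¹ * apow n (K * c) (P + i) * apow n L Q) * BSt n := by
          group
      _ = (BSt n)⁻¹ * apow n (K * c) (P + i) * BSt n := by
          rw [hcomm.inv_left.eq]; group
      _ = apow n (K * c) (P + i + 1) := conj_t_one n (K*c) (P+i)
      _ = apow n (K * c) (P + (i + 1)) := by ring_nf

lemma addRight_one_zpow (m : ℤ) : (Equiv.addRight (1:ℚ)) ^ m = Equiv.addRight (m : ℚ) := by
  induction m using Int.induction_on with
  | zero => ext x; simp
  | succ i ih =>
    rw [zpow_add_one, ih]; ext x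
    simp [Equiv.Perm.mul_apply]; push_cast; ring
  | pred i ih =>
    rw [zpow_sub_one, ih]; ext x
    simp [Equiv.Perm.mul_apply, Equiv.Perm.inv_def]
    push_cast; ring

noncomputable def rho (n : ℤ) (h0 : (n:ℚ) ≠ 0) : BS n →* Equiv.Perm ℚ :=
  PresentedGroup.toGroup
    (f := fun b => cond b (MulAction.toPermHom ℚˣ ℚ (Units.mk0 (n:ℚ) h0)) (Equiv.addRight (1:ℚ)))
    (by
      intro r hr
      rw [BSrel, Set.mem_singleton_iff] at hr
      subst hr
      simp only [map_mul, map_zpow, map_inv, FreeGroup.lift_apply_of, cond_true, cond_false]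
      rw [mul_inv_eq_one, addRight_one_zpow]
      ext x
      simp [Equiv.Perm.mul_apply, Equiv.Perm.inv_def, MulAction.toPermHom_apply,
        Units.smul_def]
      field_simp)

lemma rho_t_zpow (n : ℤ) (h0 : (n:ℚ) ≠ 0) (m : ℤ) (x : ℚ) :
    (rho n h0 ((BSt n) ^ m)) x = (n:ℚ) ^ m * x := by
  rw [map_zpow]
  have ht : rho n h0 (BSt n) = MulAction.toPermHom ℚˣ ℚ (Units.mk0 (n:ℚ) h0) :=
    PresentedGroup.toGroup.of _
  rw [ht, ← map_zpow]
  simp [MulAction.toPermHom_apply, Units.smul_def, Units.val_zpow_eq_zpow_val]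

lemma rho_a_zpow (n : ℤ) (h0 : (n:ℚ) ≠ 0) (c : ℤ) (x : ℚ) :
    (rho n h0 ((BSa n) ^ c)) x = x + c := by
  rw [map_zpow]
  have ha : rho n h0 (BSa n) = Equiv.addRight (1:ℚ) := PresentedGroup.toGroup.of _
  rw [ha, addRight_one_zpow]
  simp

lemma rho_apow (n : ℤ) (h0 : (n:ℚ) ≠ 0) (c r : ℤ) (x : ℚ) :
    (rho n h0 (apow n c r)) x = x + c * ((n:ℚ) ^ r)⁻¹ := by
  have hr0 : ((n:ℚ) ^ r) ≠ 0 := zpow_ne_zero _ h0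
  rw [apow, map_mul, map_mul, Equiv.Perm.mul_apply, Equiv.Perm.mul_apply,
    rho_t_zpow, rho_a_zpow, rho_t_zpow, zpow_neg]
  field_simp

noncomputable def ee (n m : ℤ) : ℚ := ((n:ℚ) ^ m - 1) / ((n:ℚ) - 1)

lemma ee_zero (n : ℤ) : ee n 0 = 0 := by simp [ee]

lemma ee_one (n : ℤ) (h1 : (n:ℚ) - 1 ≠ 0) : ee n 1 = 1 := by
  rw [ee, zpow_one, div_self h1]

lemma ee_add (n : ℤ) (h0 : (n:ℚ) ≠ 0) (h1 : (n:ℚ) - 1 ≠ 0) (m m' : ℤ) :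
    ee n (m + m') = ee n m + (n:ℚ) ^ m * ee n m' := by
  rw [ee, ee, ee, zpow_add₀ h0]
  field_simp
  ring

lemma zpow_mem_closure (n : ℤ) (m : ℤ) :
    (n:ℚ) ^ m ∈ Subring.closure {((n:ℚ))⁻¹} := by
  obtain ⟨j, rfl | rfl⟩ := Int.eq_nat_or_neg m
  · rw [zpow_natCast]
    exact pow_mem (by simpa using intCast_mem (Subring.closure {((n:ℚ))⁻¹}) n) j
  · rw [zpow_neg, zpow_natCast, ← inv_pow]
    exact pow_mem (Subring.subset_closure (Set.mem_singleton _)) j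

noncomputable def Saff (n : ℤ) (h0 : (n:ℚ) ≠ 0) (h1 : (n:ℚ) - 1 ≠ 0) (α β : ℚ) :
    Subgroup (Equiv.Perm ℚ) where
  carrier := {f | ∃ (m : ℤ) (s : ℚ), s ∈ Subring.closure {((n:ℚ))⁻¹} ∧
    ∀ x, f x = (n:ℚ) ^ m * x + β * ee n m + α * s}
  one_mem' := ⟨0, 0, zero_mem _, fun x => by simp [ee_zero]⟩
  mul_mem' := by
    rintro f g ⟨m, s, hs, hf⟩ ⟨m', s', hs', hg⟩
    refine ⟨m + m', s + (n:ℚ) ^ m * s',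
      add_mem hs (mul_mem (zpow_mem_closure n m) hs'), fun x => ?_⟩
    rw [Equiv.Perm.mul_apply, hg, hf, ee_add n h0 h1, zpow_add₀ h0]
    ring
  inv_mem' := by
    rintro f ⟨m, s, hs, hf⟩
    refine ⟨-m, -((n:ℚ) ^ (-m) * s),
      neg_mem (mul_mem (zpow_mem_closure n (-m)) hs), fun x => ?_⟩
    have hee : ee n m + (n:ℚ) ^ m * ee n (-m) = 0 := by
      rw [← ee_add n h0 h1, add_neg_cancel, ee_zero]
    rw [Equiv.Perm.inv_def, Equiv.symm_apply_eq, hf]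
    have hzz : (n:ℚ) ^ m * (n:ℚ) ^ (-m) = 1 := by
      rw [← zpow_add₀ h0, add_neg_cancel, zpow_zero]
    linear_combination (α * s - x) * hzz - β * hee

lemma closure_repr (n : ℤ) (h0 : (n:ℚ) ≠ 0) {x : ℚ}
    (hx : x ∈ Subring.closure {((n:ℚ))⁻¹}) :
    ∃ (c : ℤ) (r : ℕ), x = c / (n:ℚ) ^ r := by
  induction hx using Subring.closure_induction with
  | mem y hy =>
    rw [Set.mem_singleton_iff] at hy
    exact ⟨1, 1, by rw [hy]; simp⟩
  | zero => exact ⟨0, 0, by simp⟩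
  | one => exact ⟨1, 0, by simp⟩
  | add a b _ _ ha hb =>
    obtain ⟨c, r, rfl⟩ := ha; obtain ⟨c', r', rfl⟩ := hb
    refine ⟨c * n ^ r' + c' * n ^ r, r + r', ?_⟩
    have hr0 : (n:ℚ) ^ r ≠ 0 := pow_ne_zero _ h0
    have hr1 : (n:ℚ) ^ r' ≠ 0 := pow_ne_zero _ h0
    field_simp
    push_cast
    ring_nf
    try tauto
  | neg a _ ha =>
    obtain ⟨c, r, rfl⟩ := ha
    exact ⟨-c, r, by push_cast; ring⟩
  | mul a b _ _ ha hb =>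
    obtain ⟨c, r, rfl⟩ := ha; obtain ⟨c', r', rfl⟩ := hb
    refine ⟨c * c', r + r', ?_⟩
    have hr0 : (n:ℚ) ^ r ≠ 0 := pow_ne_zero _ h0
    have hr1 : (n:ℚ) ^ r' ≠ 0 := pow_ne_zero _ h0
    push_cast
    rw [pow_add]
    field_simp

/-- The endomorphism `φ_{α,β}` of `BS(n,1)` (sending `a ↦ a^α`, `t ↦ a^β t`,
with `α = k/nᵖ`, `β = l/n^q`) is an automorphism iff `α` is a unit of the ring
`ℤ[1/n] = Subring.closure {1/n} ⊆ ℚ`. -/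
theorem stmt12 (n : ℤ) (hn : 2 ≤ n) (k p l q : ℤ) (hp : 0 ≤ p) (hq : 0 ≤ q)
    (hmem : ((k : ℚ) / (n : ℚ) ^ p) ∈ Subring.closure {((n : ℚ))⁻¹})
    (φ : BS n →* BS n)
    (ha : φ (BSa n) = apow n k p) (ht : φ (BSt n) = apow n l q * BSt n) :
    Function.Bijective φ ↔
      IsUnit (⟨(k : ℚ) / (n : ℚ) ^ p, hmem⟩ : Subring.closure {((n : ℚ))⁻¹}) := by
  have hn2 : (2:ℚ) ≤ (n:ℚ) := by exact_mod_cast hn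
  have h0 : (n:ℚ) ≠ 0 := by linarith
  have h1 : (n:ℚ) - 1 ≠ 0 := by intro h; nlinarith
  constructor
  · -- bijective → unit
    intro hbij
    set S := Saff n h0 h1 ((k:ℚ)/(n:ℚ)^p) ((l:ℚ)/(n:ℚ)^q) with hS
    have hgen : ∀ g : BS n, (rho n h0) (φ g) ∈ S := by
      intro g
      have hle : Subgroup.closure (Set.range (PresentedGroup.of : Bool → BS n)) ≤
          Subgroup.comap ((rho n h0).comp φ) S := by
        rw [Subgroup.closure_le]
        rintro _ ⟨b, rfl⟩
        rw [SetLike.mem_coe, Subgroup.mem_comap]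
        cases b with
        | false =>
          show (rho n h0) (φ (BSa n)) ∈ S
          rw [ha]
          refine ⟨0, 1, one_mem _, fun x => ?_⟩
          rw [rho_apow n h0 k p x, zpow_zero, ee_zero]
          ring
        | true =>
          show (rho n h0) (φ (BSt n)) ∈ S
          rw [ht]
          refine ⟨1, 0, zero_mem _, fun x => ?_⟩
          rw [map_mul, Equiv.Perm.mul_apply]
          have hT1 : (rho n h0) (BSt n) x = (n:ℚ) * x := by
            simpa using rho_t_zpow n h0 1 x
          rw [hT1, rho_apow n h0 l q, ee_one n h1, zpow_one]
          ring
      have hg : g ∈ (⊤ : Subgroup (BS n)) := trivial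
      rw [← PresentedGroup.closure_range_of (BSrel n)] at hg
      exact hle hg
    obtain ⟨g, hg⟩ := hbij.2 (BSa n)
    obtain ⟨m, s, hs, hform⟩ := hgen g
    rw [hg] at hform
    have hA : ∀ x : ℚ, (rho n h0) (BSa n) x = x + 1 := fun x => by
      simpa using rho_a_zpow n h0 1 x
    have e0 := hform 0
    have e1 := hform 1
    rw [hA] at e0 e1
    have hm1 : (n:ℚ) ^ m = (n:ℚ) ^ (0:ℤ) := by rw [zpow_zero]; linarith
    have hm0 : m = 0 := zpow_right_injective₀ (by linarith) (by linarith) hm1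
    subst hm0
    rw [zpow_zero, ee_zero] at e0
    have hαs : ((k:ℚ)/(n:ℚ)^p) * s = 1 := by linarith
    exact IsUnit.of_mul_eq_one (⟨s, hs⟩ : Subring.closure {((n:ℚ))⁻¹})
      (Subtype.ext hαs)
  · -- unit → bijective
    intro hu
    obtain ⟨b, hb⟩ := isUnit_iff_exists_inv.1 hu
    have hb' : ((k:ℚ)/(n:ℚ)^p) * (b:ℚ) = 1 := congrArg Subtype.val hb
    obtain ⟨c, r, hcr⟩ := closure_repr n h0 b.2
    set M : ℕ := (p + r).toNat with hMdef
    have hpr : (M:ℤ) = p + r := Int.toNat_of_nonneg (by omega)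
    have hq1 : (k:ℚ) * c = (n:ℚ) ^ (p + (r:ℤ)) := by
      rw [hcr] at hb'
      have hp0 : (n:ℚ) ^ p ≠ 0 := zpow_ne_zero _ h0
      have hr0 : (n:ℚ) ^ r ≠ 0 := pow_ne_zero _ h0
      rw [zpow_add₀ h0, zpow_natCast]
      field_simp at hb'
      linarith
    have hkc : k * c = n ^ M := by
      have hcast : ((n:ℚ)) ^ (p + (r:ℤ)) = ((n ^ M : ℤ) : ℚ) := by
        rw [← hpr, zpow_natCast]; push_cast; ring
      have : ((k * c : ℤ) : ℚ) = ((n ^ M : ℤ) : ℚ) := by push_cast; rw [hq1, hcast]; push_cast; ring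
      exact_mod_cast this
    -- construct the inverse endomorphism ψ
    have hrel : ∀ w ∈ BSrel n, FreeGroup.lift
        (fun b => cond b (apow n (-(c*l)) ((r:ℤ)+q) * BSt n) (apow n c (r:ℤ))) w = 1 := by
      intro w hw
      rw [BSrel, Set.mem_singleton_iff] at hw
      subst hw
      simp only [map_mul, map_zpow, map_inv, FreeGroup.lift_apply_of, cond_true, cond_false]
      rw [mul_inv_eq_one]
      have hAn : (apow n c (r:ℤ)) ^ n = apow n (c * n) (r:ℤ) := apow_zpow n c r n
      have hcom : Commute (apow n (-(c*l)) ((r:ℤ)+q)) (apow n (c*n) (r:ℤ)) :=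
        apow_commute n (-(c*l)) (c*n) ((r:ℤ)+q) (r:ℤ)
      calc (apow n (-(c*l)) ((r:ℤ)+q) * BSt n)⁻¹ * (apow n c (r:ℤ)) ^ n *
            (apow n (-(c*l)) ((r:ℤ)+q) * BSt n)
          = (BSt n)⁻¹ * ((apow n (-(c*l)) ((r:ℤ)+q))⁻¹ * apow n (c*n) (r:ℤ) *
              apow n (-(c*l)) ((r:ℤ)+q)) * BSt n := by rw [hAn]; group
        _ = (BSt n)⁻¹ * apow n (c*n) (r:ℤ) * BSt n := by rw [hcom.inv_left.eq]; group
        _ = apow n (c*n) ((r:ℤ)+1) := conj_t_one n (c*n) (r:ℤ)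
        _ = apow n c (r:ℤ) := by rw [mul_comm c n]; exact apow_reduce n c (r:ℤ)
    set ψ : BS n →* BS n := PresentedGroup.toGroup hrel with hψdef
    have hψa : ψ (BSa n) = apow n c (r:ℤ) := PresentedGroup.toGroup.of hrel
    have hψt : ψ (BSt n) = apow n (-(c*l)) ((r:ℤ)+q) * BSt n := PresentedGroup.toGroup.of hrel
    have hr' : (0:ℤ) ≤ (r:ℤ) := Int.natCast_nonneg r
    have hfg : φ.comp ψ = MonoidHom.id (BS n) := by
      apply PresentedGroup.ext
      intro b
      cases b with
      | false =>
        show φ (ψ (BSa n)) = BSa n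
        rw [hψa, hom_apow n φ k p l q ha ht c (r:ℤ) hr']
        have h2 : apow n (k * c) (p + (r:ℤ)) = apow n ((1:ℤ) * n ^ M) ((0:ℤ) + (M:ℤ)) := by
          rw [one_mul, zero_add, hkc, hpr]
        rw [h2, apow_reduce' n 1 0 M, apow_p_zero, zpow_one]
      | true =>
        show φ (ψ (BSt n)) = BSt n
        rw [hψt, map_mul, hom_apow n φ k p l q ha ht (-(c*l)) ((r:ℤ)+q)
          (by omega), ht]
        have h3 : apow n (k * -(c * l)) (p + ((r:ℤ) + q)) = apow n (-l) q := by
          have e1 : k * -(c*l) = (-l) * n ^ M := by rw [← hkc]; ring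
          have e2 : p + ((r:ℤ) + q) = q + (M:ℤ) := by omega
          rw [e1, e2, apow_reduce']
        rw [h3, ← mul_assoc, apow_mul_same, neg_add_cancel, apow_zero, one_mul]
    have hgf : ψ.comp φ = MonoidHom.id (BS n) := by
      apply PresentedGroup.ext
      intro b
      cases b with
      | false =>
        show ψ (φ (BSa n)) = BSa n
        rw [ha, hom_apow n ψ c (r:ℤ) (-(c*l)) ((r:ℤ)+q) hψa hψt k p hp]
        have h2 : apow n (c * k) ((r:ℤ) + p) = apow n ((1:ℤ) * n ^ M) ((0:ℤ) + (M:ℤ)) := by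
          rw [one_mul, zero_add, mul_comm c k, hkc]
          congr 1
          omega
        rw [h2, apow_reduce' n 1 0 M, apow_p_zero, zpow_one]
      | true =>
        show ψ (φ (BSt n)) = BSt n
        rw [ht, map_mul, hom_apow n ψ c (r:ℤ) (-(c*l)) ((r:ℤ)+q) hψa hψt l q hq, hψt]
        rw [← mul_assoc, apow_mul_same]
        have e1 : c * l + -(c * l) = 0 := by ring
        rw [e1, apow_zero, one_mul]
    refine Function.bijective_iff_has_inverse.2 ⟨ψ, fun x => ?_, fun x => ?_⟩
    · have := DFunLike.congr_fun hgf x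
      simpa using this
    · have := DFunLike.congr_fun hfg x
      simpa using this
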